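/- Let R be a Noetherian ring. The set Princ(R) of principal ideals of R is dense in the space I(R) of ideals of R, with respect to the constructible topology, if and only if R is a principal ideal ring. -/

import Mathlib

open Set TopologicalSpace

/-- A topology `t` on `X` makes `X` a spectral space: quasi-compact, `T0`, sober, with a basis
of quasi-compact open sets closed under finite (binary) intersections. -/
def IsSpectral (X : Type*) (t : TopologicalSpace X) : Prop :=
  @CompactSpace X t ∧ @T0Space X t ∧ @QuasiSober X t ∧
    ∃ B : Set (Set X),
      (∀ s ∈ B, @IsCompact X t s ∧ @IsOpen X t s) ∧
      (∀ s ∈ B, ∀ u ∈ B, s ∩ u ∈ B) ∧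
      @TopologicalSpace.IsTopologicalBasis X t B

/-- The specialization order of a topology: `x ≤ y` iff `y ∈ closure {x}`. -/
def specLE {X : Type*} (t : TopologicalSpace X) (x y : X) : Prop := y ∈ @closure X t {x}

/-- `b` is the supremum of `S` with respect to the specialization order of `t`. -/
def IsSupSpec {X : Type*} (t : TopologicalSpace X) (S : Set X) (b : X) : Prop :=
  (∀ x ∈ S, specLE t x b) ∧ ∀ c, (∀ x ∈ S, specLE t x c) → specLE t b c

/-- `b` is the infimum of `S` with respect to the specialization order of `t`. -/
def IsInfSpec {X : Type*} (t : TopologicalSpace X) (S : Set X) (b : X) : Prop :=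
  (∀ x ∈ S, specLE t b x) ∧ ∀ c, (∀ x ∈ S, specLE t c x) → specLE t c b

/-- The constructible (patch) topology associated to a topology `t`: the coarsest topology in
which all quasi-compact `t`-open sets are clopen. -/
def patchOf {X : Type*} (t : TopologicalSpace X) : TopologicalSpace X :=
  TopologicalSpace.generateFrom
    {s : Set X | (@IsCompact X t s ∧ @IsOpen X t s) ∨ (@IsCompact X t sᶜ ∧ @IsOpen X t sᶜ)}

/-- Closure with respect to the constructible (patch) topology of `t`. -/
def patchClosure {X : Type*} (t : TopologicalSpace X) (Y : Set X) : Set X :=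
  @closure X (patchOf t) Y

/-- The Zariski topology on the set of `R`-submodules of `M`, generated by the sets
`B(x₁,…,xₙ) = {N | x₁,…,xₙ ∈ N}`. -/
def zarModTop (R M : Type*) [Semiring R] [AddCommMonoid M] [Module R M] :
    TopologicalSpace (Submodule R M) :=
  TopologicalSpace.generateFrom
    {U : Set (Submodule R M) | ∃ F : Set M, F.Finite ∧ U = {N : Submodule R M | F ⊆ (N : Set M)}}

/-- The Zariski topology on the set of ideals of `R`. -/
def zarIdealTop (R : Type*) [CommRing R] : TopologicalSpace (Ideal R) :=
  TopologicalSpace.generateFrom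
    {U : Set (Ideal R) | ∃ F : Set R, F.Finite ∧ U = {I : Ideal R | F ⊆ (I : Set R)}}

/-! A maximal ideal `M` of a Noetherian ring is isolated in the patch topology: `Ici I` is
Zariski quasi-compact open for finitely generated `I`, and `{M} = Ici M \ Ici ⊤`. So if principal
ideals are patch-dense, every maximal ideal is principal. Kaplansky's argument then applies: an
ideal `P` maximal among non-principal ideals is prime (principality is an Oka property) and lies in
a principal maximal ideal `(m)` with `m ∉ P`, whence `P = mP` and Nakayama yields `z ∉ P` with
`zP = 0`. By maximality `P + (z) = (s)` with `s ∉ P`, so `P = sP = P² + zP = P²`, and a finitely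
generated idempotent ideal is principal. -/

open Filter Topology

theorem isCompact_of_principal_le_nhds {X : Type*} [TopologicalSpace X] {s : Set X} {x : X}
    (hx : x ∈ s) (h : 𝓟 s ≤ 𝓝 x) : IsCompact s := fun f _ hf =>
  ⟨x, hx, by rwa [ClusterPt, inf_eq_right.mpr (hf.trans h)]⟩

section Patch

variable {X : Type*} {t : TopologicalSpace X} {s : Set X}

theorem isClopen_patchOf (hc : @IsCompact _ t s) (ho : IsOpen[t] s) : @IsClopen _ (patchOf t) s :=
  letI := patchOf t
  have hcompl : IsOpen sᶜ :=
    isOpen_generateFrom_of_mem (Or.inr (by rw [compl_compl]; exact ⟨hc, ho⟩))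
  ⟨isOpen_compl_iff.mp hcompl, isOpen_generateFrom_of_mem (Or.inl ⟨hc, ho⟩)⟩

end Patch

section Zariski

variable {R : Type*} [CommRing R]

theorem upperSet_le_zarIdealTop : Topology.upperSet (Ideal R) ≤ zarIdealTop R :=
  le_generateFrom <| by
    rintro _ ⟨F, -, rfl⟩ I J hIJ (hI : F ⊆ I)
    exact hI.trans hIJ

theorem isUpperSet_of_isOpen_zarIdealTop {U : Set (Ideal R)} (hU : IsOpen[zarIdealTop R] U) :
    IsUpperSet U :=
  TopologicalSpace.le_def.mp upperSet_le_zarIdealTop U hU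

theorem isOpen_zarIdealTop_Ici {I : Ideal R} (hI : I.FG) : IsOpen[zarIdealTop R] (Ici I) := by
  obtain ⟨F, rfl⟩ := hI
  refine isOpen_generateFrom_of_mem ⟨F, F.finite_toSet, ?_⟩
  ext J
  exact Ideal.span_le

theorem isCompact_zarIdealTop_Ici (I : Ideal R) : @IsCompact _ (zarIdealTop R) (Ici I) :=
  letI := zarIdealTop R
  isCompact_of_principal_le_nhds self_mem_Ici <| le_nhds_iff.mpr fun _ hI hU =>
    mem_principal.mpr fun _ hIJ => isUpperSet_of_isOpen_zarIdealTop hU hIJ hI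

theorem isClopen_patchOf_zarIdealTop_Ici {I : Ideal R} (hI : I.FG) :
    @IsClopen _ (patchOf (zarIdealTop R)) (Ici I) :=
  isClopen_patchOf (isCompact_zarIdealTop_Ici I) (isOpen_zarIdealTop_Ici hI)

theorem isOpen_patchOf_zarIdealTop_singleton [IsNoetherianRing R] {M : Ideal R}
    (hM : M.IsMaximal) : IsOpen[patchOf (zarIdealTop R)] {M} := by
  let := patchOf (zarIdealTop R)
  have hTop : ⊤ ∉ ({M} : Set (Ideal R)) := hM.ne_top.symm
  rw [← insert_sdiff_self_of_notMem hTop, ← Ici_top, ← (Ideal.isMaximal_def.mp hM).Ici_eq]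
  exact (isClopen_patchOf_zarIdealTop_Ici (IsNoetherian.noetherian M)).isOpen.sdiff
    (isClopen_patchOf_zarIdealTop_Ici (IsNoetherian.noetherian ⊤)).isClosed

end Zariski

namespace Ideal

variable {R : Type*} [CommRing R]

theorem IsPrime.span_singleton_mul_eq_self {P : Ideal R} (hP : P.IsPrime) {x : R} (hx : x ∉ P)
    (hPx : P ≤ span {x}) : span {x} * P = P := by
  refine le_antisymm mul_le_right fun p hp => ?_
  obtain ⟨t, rfl⟩ := mem_span_singleton'.mp (hPx hp)
  have ht : t ∈ P := (hP.mem_or_mem hp).resolve_right hx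
  rw [mul_comm t x]
  exact mul_mem_mul (mem_span_singleton_self x) ht

theorem IsPrime.exists_notMem_forall_mul_eq_zero [IsNoetherianRing R] {P : Ideal R}
    (hP : P.IsPrime) {m : R} (hm : span {m} ≠ ⊤) (hmP : m ∉ P) (hPm : P ≤ span {m}) :
    ∃ z ∉ P, ∀ p ∈ P, z * p = 0 := by
  obtain ⟨z, hz, hzP⟩ :=
    Submodule.exists_sub_one_mem_and_smul_eq_zero_of_fg_of_le_smul (span {m}) P
      (IsNoetherian.noetherian P) (hP.span_singleton_mul_eq_self hmP hPm).ge
  refine ⟨z, fun hzP' => hm ((eq_top_iff_one _).mpr ?_), hzP⟩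
  simpa using sub_mem (hPm hzP') hz

theorem IsPrime.isIdempotentElem_of_isPrincipal_sup_span_singleton {P : Ideal R}
    (hP : P.IsPrime) {z : R} (hz : z ∉ P) (hzP : ∀ p ∈ P, z * p = 0)
    (hprinc : (P ⊔ span {z}).IsPrincipal) : IsIdempotentElem P := by
  obtain ⟨s, hs⟩ := hprinc
  rw [submodule_span_eq] at hs
  have hsP : s ∉ P := fun h =>
    hz <| (span_singleton_le_iff_mem P).mpr h (hs ▸ mem_sup_right (mem_span_singleton_self z))
  have hzP' : span {z} * P = ⊥ := le_bot_iff.mp (span_singleton_mul_le_iff.mpr hzP)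
  calc P * P = P * P ⊔ span {z} * P := by rw [hzP', sup_bot_eq]
    _ = span {s} * P := by rw [← sup_mul, hs]
    _ = P := hP.span_singleton_mul_eq_self hsP (hs ▸ le_sup_left)

end Ideal

theorem IsPrincipalIdealRing.of_isMaximal_isPrincipal {R : Type*} [CommRing R] [IsNoetherianRing R]
    (h : ∀ M : Ideal R, M.IsMaximal → M.IsPrincipal) : IsPrincipalIdealRing R := by
  by_contra hR
  obtain ⟨P, hP⟩ := Ideal.exists_maximal_not_isPrincipal hR
  have hPrime : P.IsPrime := Ideal.isOka_isPrincipal.isPrime_of_maximal_not hP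
  obtain ⟨M, hM, hPM⟩ := P.exists_le_maximal hPrime.ne_top
  obtain ⟨m, rfl⟩ := h M hM
  rw [Ideal.submodule_span_eq] at hM hPM
  have hmP : m ∉ P := fun hm =>
    hP.prop ⟨m, le_antisymm hPM ((Ideal.span_singleton_le_iff_mem P).mpr hm)⟩
  obtain ⟨z, hzP, hz⟩ := hPrime.exists_notMem_forall_mul_eq_zero hM.ne_top hmP hPM
  have hPz : (P ⊔ Ideal.span {z}).IsPrincipal :=
    not_not.mp (hP.not_prop_of_gt (Submodule.lt_sup_iff_notMem.mpr hzP))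
  obtain ⟨e, -, he⟩ := (Ideal.isIdempotentElem_iff_of_fg P (IsNoetherian.noetherian P)).mp
    (hPrime.isIdempotentElem_of_isPrincipal_sup_span_singleton hzP hz hPz)
  exact hP.prop ⟨e, he⟩

theorem stmt16 (R : Type*) [CommRing R] [IsNoetherianRing R] :
    @Dense (Ideal R) (patchOf (zarIdealTop R))
        {I : Ideal R | Submodule.IsPrincipal I} ↔
      IsPrincipalIdealRing R := by
  let := patchOf (zarIdealTop R)
  refine ⟨fun hDense => .of_isMaximal_isPrincipal fun M hM => ?_, fun hR => ?_⟩
  · obtain ⟨_, rfl, hMPrincipal⟩ := hDense.inter_open_nonempty {M}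
      (isOpen_patchOf_zarIdealTop_singleton hM) (singleton_nonempty M)
    exact hMPrincipal
  · exact eq_univ_of_forall hR.principal ▸ dense_univ
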